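/- Let x_K, x_L, x_{K*} be noncollinear points in ℝ² and let x_σ be a point on the open segment (x_K, x_L), splitting the triangle (x_K, x_L, x_{K*}) into two sub-triangles T_K = (x_{K*}, x_K, x_σ) and T_L = (x_{K*}, x_L, x_σ). Let μ_K, μ_L > 0. If the denominator D = -( (n^K_{[x_σ,x_{K*}]})^T μ_K n_{[x_{K*},x_K]} )/(2 m(T_K)) - ( (n^L_{[x_σ,x_{K*}]})^T μ_L n_{[x_{K*},x_L]} )/(2 m(T_L)) is nonzero, then there exists a unique value u_σ such that the piecewise-affine function taking values u_K, u_L, u_{K*}, u_σ at x_K, x_L, x_{K*}, x_σ respectively satisfies the flux conservation condition μ_K (∇u)|_{T_K} · n^K_{[x_σ,x_{K*}]} + μ_L (∇u)|_{T_L} · n^L_{[x_σ,x_{K*}]} = 0, and u_σ is a linear combination u_σ = β_K u_K + β_L u_L + β_{K*} u_{K*} with coefficients β_K, β_L, β_{K*} depending only on the geometry and on μ_K, μ_L. -/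
import Mathlib


noncomputable section

def dot (v w : ℝ × ℝ) : ℝ := v.1 * w.1 + v.2 * w.2
def cross2 (v w : ℝ × ℝ) : ℝ := v.1 * w.2 - v.2 * w.1

lemma key (a b n m : ℝ × ℝ) (hc : cross2 a b ≠ 0) (hm1 : dot m a = 0)
    (hm2 : dot m m = dot a a) (hm3 : dot m b < 0) :
    cross2 a n * |cross2 a b| = -(dot n m) * cross2 a b := by
  have haa : 0 < dot a a := by
    rcases lt_or_eq_of_le (show (0:ℝ) ≤ dot a a from by simp only [dot]; nlinarith [mul_self_nonneg a.1, mul_self_nonneg a.2]) with h | h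
    · exact h
    · exfalso
      apply hc
      simp only [dot] at h
      have h1 : a.1 = 0 := by nlinarith [sq_nonneg a.1, sq_nonneg a.2]
      have h2 : a.2 = 0 := by nlinarith [sq_nonneg a.1, sq_nonneg a.2]
      simp only [cross2, h1, h2]; ring
  have hk2 : cross2 a m ^ 2 = dot a a ^ 2 := by
    simp only [dot, cross2] at hm1 hm2 ⊢
    linear_combination (a.1 * a.1 + a.2 * a.2) * hm2 - (a.1 * m.1 + a.2 * m.2) * hm1
  have hkc : cross2 a m * cross2 a b < 0 := by
    have h2 : cross2 a m * cross2 a b = dot m b * dot a a := by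
      simp only [dot, cross2] at hm1 ⊢
      linear_combination (-(a.1 * b.1 + a.2 * b.2)) * hm1
    rw [h2]
    exact mul_neg_of_neg_of_pos hm3 haa
  have hlag : dot n m * dot a a = cross2 a m * cross2 a n := by
    simp only [dot, cross2] at hm1 ⊢
    linear_combination (a.1 * n.1 + a.2 * n.2) * hm1
  have hfac : (cross2 a m - dot a a) * (cross2 a m + dot a a) = 0 := by linear_combination hk2
  rcases lt_trichotomy (cross2 a b) 0 with h | h | h
  · have hkpos : 0 < cross2 a m := by nlinarith
    have hk : cross2 a m = dot a a := by
      rcases mul_eq_zero.mp hfac with h' | h'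
      · linarith [sub_eq_zero.mp h']
      · exfalso; nlinarith
    rw [hk] at hlag
    have h5 : dot n m = cross2 a n := mul_left_cancel₀ (ne_of_gt haa) (by linear_combination hlag)
    rw [abs_of_neg h, ← h5]; ring
  · exact absurd h hc
  · have hkneg : cross2 a m < 0 := by nlinarith
    have hk : cross2 a m = -dot a a := by
      rcases mul_eq_zero.mp hfac with h' | h'
      · exfalso; nlinarith [sub_eq_zero.mp h']
      · linarith [add_eq_zero_iff_eq_neg.mp h']
    rw [hk] at hlag
    have h5 : dot n m = -cross2 a n := mul_left_cancel₀ (ne_of_gt haa) (by linear_combination hlag)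
    rw [abs_of_pos h, h5]; ring

/-- flux-conservation determines the edge value `u_σ` uniquely, as a
linear combination of `u_K, u_L, u_{K*}` with geometric coefficients.
Gradients on the sub-triangles are characterized by their directional derivatives;
normals are characterized by perpendicularity, length and outward orientation. -/
theorem stmt2 (xK xL xKs xσ : ℝ × ℝ) (t : ℝ) (ht : t ∈ Set.Ioo (0:ℝ) 1)
    (hσ : xσ = xK + t • (xL - xK))
    (hnc : cross2 (xL - xK) (xKs - xK) ≠ 0)
    (μK μL : ℝ) (hμK : 0 < μK) (hμL : 0 < μL)
    (nK nL nKK nKL : ℝ × ℝ) (mK mL : ℝ)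
    (hmK : mK = |cross2 (xK - xKs) (xσ - xKs)| / 2)
    (hmL : mL = |cross2 (xL - xKs) (xσ - xKs)| / 2)
    -- `nK` : outward normal of `T_K = (x_{K*}, x_K, x_σ)` at the edge `[x_σ, x_{K*}]`
    (hnK1 : dot nK (xKs - xσ) = 0) (hnK2 : dot nK nK = dot (xKs - xσ) (xKs - xσ))
    (hnK3 : dot nK (xK - xσ) < 0)
    -- `nL` : outward normal of `T_L = (x_{K*}, x_L, x_σ)` at the edge `[x_σ, x_{K*}]`
    (hnL1 : dot nL (xKs - xσ) = 0) (hnL2 : dot nL nL = dot (xKs - xσ) (xKs - xσ))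
    (hnL3 : dot nL (xL - xσ) < 0)
    -- `nKK` : outward normal of `T_K` at the edge `[x_{K*}, x_K]`
    (hnKK1 : dot nKK (xK - xKs) = 0) (hnKK2 : dot nKK nKK = dot (xK - xKs) (xK - xKs))
    (hnKK3 : dot nKK (xσ - xKs) < 0)
    -- `nKL` : outward normal of `T_L` at the edge `[x_{K*}, x_L]`
    (hnKL1 : dot nKL (xL - xKs) = 0) (hnKL2 : dot nKL nKL = dot (xL - xKs) (xL - xKs))
    (hnKL3 : dot nKL (xσ - xKs) < 0)
    (D : ℝ)
    (hD : D = -(μK * dot nK nKK) / (2 * mK) - (μL * dot nL nKL) / (2 * mL))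
    (hD0 : D ≠ 0) :
    ∃ βK βL βKs : ℝ, ∀ uK uL uKs : ℝ, ∃! uσ : ℝ,
      (∀ gK gL : ℝ × ℝ,
        (dot gK (xK - xKs) = uK - uKs ∧ dot gK (xσ - xKs) = uσ - uKs) →
        (dot gL (xL - xKs) = uL - uKs ∧ dot gL (xσ - xKs) = uσ - uKs) →
        μK * dot gK nK + μL * dot gL nL = 0) ∧
      uσ = βK * uK + βL * uL + βKs * uKs := by
  have hcK0 : cross2 (xK - xKs) (xσ - xKs) ≠ 0 := by
    have h1 : cross2 (xK - xKs) (xσ - xKs) = t * cross2 (xL - xK) (xKs - xK) := by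
      simp only [hσ, cross2, Prod.fst_sub, Prod.snd_sub, Prod.fst_add, Prod.snd_add,
        Prod.smul_fst, Prod.smul_snd, smul_eq_mul]
      ring
    rw [h1]; exact mul_ne_zero (ne_of_gt ht.1) hnc
  have hcL0 : cross2 (xL - xKs) (xσ - xKs) ≠ 0 := by
    have h1 : cross2 (xL - xKs) (xσ - xKs) = (t - 1) * cross2 (xL - xK) (xKs - xK) := by
      simp only [hσ, cross2, Prod.fst_sub, Prod.snd_sub, Prod.fst_add, Prod.snd_add,
        Prod.smul_fst, Prod.smul_snd, smul_eq_mul]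
      ring
    rw [h1]; exact mul_ne_zero (by nlinarith [ht.2] : t - 1 ≠ 0) hnc
  have habsK : |cross2 (xK - xKs) (xσ - xKs)| ≠ 0 := abs_ne_zero.mpr hcK0
  have habsL : |cross2 (xL - xKs) (xσ - xKs)| ≠ 0 := abs_ne_zero.mpr hcL0
  have hKeyK := key (xK - xKs) (xσ - xKs) nK nKK hcK0 hnKK1 hnKK2 hnKK3
  have hKeyL := key (xL - xKs) (xσ - xKs) nL nKL hcL0 hnKL1 hnKL2 hnKL3
  have hAK : cross2 (xK - xKs) nK / cross2 (xK - xKs) (xσ - xKs)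
      = -(dot nK nKK) / |cross2 (xK - xKs) (xσ - xKs)| := by
    rw [div_eq_div_iff hcK0 habsK]; linear_combination hKeyK
  have hAL : cross2 (xL - xKs) nL / cross2 (xL - xKs) (xσ - xKs)
      = -(dot nL nKL) / |cross2 (xL - xKs) (xσ - xKs)| := by
    rw [div_eq_div_iff hcL0 habsL]; linear_combination hKeyL
  have h2mK : 2 * mK = |cross2 (xK - xKs) (xσ - xKs)| := by rw [hmK]; ring
  have h2mL : 2 * mL = |cross2 (xL - xKs) (xσ - xKs)| := by rw [hmL]; ring
  have hD' : D = μK * (cross2 (xK - xKs) nK / cross2 (xK - xKs) (xσ - xKs))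
      + μL * (cross2 (xL - xKs) nL / cross2 (xL - xKs) (xσ - xKs)) := by
    rw [hD, hAK, hAL, ← h2mK, ← h2mL]; ring
  have hDclear : D * cross2 (xK - xKs) (xσ - xKs) * cross2 (xL - xKs) (xσ - xKs)
      = μK * cross2 (xK - xKs) nK * cross2 (xL - xKs) (xσ - xKs)
      + μL * cross2 (xL - xKs) nL * cross2 (xK - xKs) (xσ - xKs) := by
    rw [hD']; field_simp
  refine ⟨-(μK * cross2 nK (xσ - xKs) / cross2 (xK - xKs) (xσ - xKs)) / D,
    -(μL * cross2 nL (xσ - xKs) / cross2 (xL - xKs) (xσ - xKs)) / D,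
    1 + (μK * cross2 nK (xσ - xKs) / cross2 (xK - xKs) (xσ - xKs)) / D
      + (μL * cross2 nL (xσ - xKs) / cross2 (xL - xKs) (xσ - xKs)) / D,
    fun uK uL uKs => ?_⟩
  set U : ℝ := -(μK * cross2 nK (xσ - xKs) / cross2 (xK - xKs) (xσ - xKs)) / D * uK
      + -(μL * cross2 nL (xσ - xKs) / cross2 (xL - xKs) (xσ - xKs)) / D * uL
      + (1 + (μK * cross2 nK (xσ - xKs) / cross2 (xK - xKs) (xσ - xKs)) / D
          + (μL * cross2 nL (xσ - xKs) / cross2 (xL - xKs) (xσ - xKs)) / D) * uKs with hUdef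
  refine ⟨U, ⟨?_, hUdef⟩, fun y hy => hy.2.trans hUdef.symm⟩
  rintro gK gL ⟨h1, h2⟩ ⟨h3, h4⟩
  have eK : dot gK nK * cross2 (xK - xKs) (xσ - xKs)
      = (uK - uKs) * cross2 nK (xσ - xKs) + (U - uKs) * cross2 (xK - xKs) nK := by
    simp only [dot, cross2] at h1 h2 ⊢
    linear_combination (nK.1 * (xσ - xKs).2 - nK.2 * (xσ - xKs).1) * h1
      + ((xK - xKs).1 * nK.2 - (xK - xKs).2 * nK.1) * h2
  have eL : dot gL nL * cross2 (xL - xKs) (xσ - xKs)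
      = (uL - uKs) * cross2 nL (xσ - xKs) + (U - uKs) * cross2 (xL - xKs) nL := by
    simp only [dot, cross2] at h3 h4 ⊢
    linear_combination (nL.1 * (xσ - xKs).2 - nL.2 * (xσ - xKs).1) * h3
      + ((xL - xKs).1 * nL.2 - (xL - xKs).2 * nL.1) * h4
  have hu : (uK - uKs) * (μK * cross2 nK (xσ - xKs)) * cross2 (xL - xKs) (xσ - xKs)
      + (uL - uKs) * (μL * cross2 nL (xσ - xKs)) * cross2 (xK - xKs) (xσ - xKs)
      + (U - uKs) * (D * cross2 (xK - xKs) (xσ - xKs) * cross2 (xL - xKs) (xσ - xKs)) = 0 := by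
    rw [hUdef]
    field_simp
    ring
  rw [hDclear] at hu
  have hz : (μK * dot gK nK + μL * dot gL nL)
      * (cross2 (xK - xKs) (xσ - xKs) * cross2 (xL - xKs) (xσ - xKs)) = 0 := by
    linear_combination μK * cross2 (xL - xKs) (xσ - xKs) * eK
      + μL * cross2 (xK - xKs) (xσ - xKs) * eL + hu
  exact (mul_eq_zero.mp hz).resolve_right (mul_ne_zero hcK0 hcL0)
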